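/- Let x ∈ ℤ^P be a lattice point of the type B poset polytope 𝒬^B_O(λ) where λ = (a₁,…,a_n) is integral dominant with a_n even. Then there exist unique order ideals J₁ ⊆ … ⊆ J_m in P and a set D ⊆ [1,n] such that x = x^{J₁,∅} + … + x^{J_{m−1},∅} + x^{J_m,D}, where for k ≤ n−1 exactly a_k of the J_i lie in 𝒥ₖ and a_n/2 of them lie in 𝒥ₙ. -/

import Mathlib

open scoped Classical Pointwise

noncomputable section

/-- Position of `j` in the total order `1 ⋖ … ⋖ n ⋖ -n ⋖ … ⋖ -1` on `N`. -/
def ordKey (n : ℕ) (j : ℤ) : ℤ := if 0 < j then j else 2 * n + 1 + j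

/-- Membership in the type C Gelfand–Tsetlin poset `P`:
pairs `(i,j)` with `1 ≤ i ≤ n` and `i ≤ |j| ≤ n`. -/
def inP (n : ℕ) (p : ℤ × ℤ) : Prop :=
  1 ≤ p.1 ∧ p.1 ≤ (n : ℤ) ∧ p.1 ≤ |p.2| ∧ |p.2| ≤ (n : ℤ)

/-- The order relation `⪯` of `P`: `(i₁,j₁) ⪯ (i₂,j₂)` iff `i₁ ≤ i₂` and `j₁ ⩽̇ j₂`. -/
def ple (n : ℕ) (p q : ℤ × ℤ) : Prop :=
  p.1 ≤ q.1 ∧ ordKey n p.2 ≤ ordKey n q.2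

/-- Strict version of `⪯`. -/
def plt (n : ℕ) (p q : ℤ × ℤ) : Prop := ple n p q ∧ p ≠ q

/-- The elements of `N = {1,…,n,-n,…,-1}` listed in increasing `⋖` order. -/
def jList (n : ℕ) : List ℤ :=
  ((List.range n).map fun t => (t : ℤ) + 1) ++ ((List.range n).map fun t => (t : ℤ) - n)

/-- All pairs `(i,j)` with `i ∈ [1,n]`, `j ∈ N`, ordered first by `i` increasing,
then by `j` increasing with respect to `⋖`. -/
def posList (n : ℕ) : List (ℤ × ℤ) :=
  (List.range n).flatMap fun a => (jList n).map fun j => ((a : ℤ) + 1, j)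

/-- `P` as a finite set. -/
def Pfin (n : ℕ) : Finset (ℤ × ℤ) := (posList n).toFinset.filter (inP n)

/-- `N` as a finite set. -/
def Nfin (n : ℕ) : Finset ℤ := (jList n).toFinset

/-- The diagonal `A = {(i,i) : 1 ≤ i ≤ n}`. -/
def Aset (n : ℕ) : Finset (ℤ × ℤ) :=
  (Finset.range n).image fun t => (((t : ℤ) + 1, (t : ℤ) + 1) : ℤ × ℤ)

/-- Order ideals (downward closed subsets) of `P`. -/
def IsIdeal (n : ℕ) (J : Finset (ℤ × ℤ)) : Prop :=
  (∀ p ∈ J, inP n p) ∧ ∀ p ∈ J, ∀ q ∈ Pfin n, ple n q p → q ∈ J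

/-- The set of `≺`-maximal elements of `J`. -/
def maxPrec (n : ℕ) (J : Finset (ℤ × ℤ)) : Finset (ℤ × ℤ) :=
  J.filter fun p => ∀ q ∈ J, ple n p q → q = p

/-- `M_O(J) = (J ∩ O) ∪ max_≺(J)`. -/
def MO (n : ℕ) (O J : Finset (ℤ × ℤ)) : Finset (ℤ × ℤ) := (J ∩ O) ∪ maxPrec n J

/-- The permutation `w_M`: the product of the transpositions `s_{i,j}` over `(i,j) ∈ M`,
ordered first by `i` increasing and then by `j` increasing with respect to `⋖`
(the leftmost factor acts last). -/
def wPerm (n : ℕ) (M : Finset (ℤ × ℤ)) : Equiv.Perm ℤ :=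
  (((posList n).filter fun p => decide (p ∈ M)).map fun p => Equiv.swap p.1 p.2).prod

/-- `w^{O,J} = w_O⁻¹ ⬝ w_{M_O(J)}`. -/
def wOJ (n : ℕ) (O J : Finset (ℤ × ℤ)) : Equiv.Perm ℤ :=
  (wPerm n O)⁻¹ * wPerm n (MO n O J)

/-- The principal order ideal `⟨i,j⟩` of `(i,j) ∈ P`. -/
def princ (n : ℕ) (p : ℤ × ℤ) : Finset (ℤ × ℤ) := (Pfin n).filter fun q => ple n q p

/-- `r(i,j) = w^{O,⟨i,j⟩}(i)`. -/
def rMap (n : ℕ) (O : Finset (ℤ × ℤ)) (i j : ℤ) : ℤ := wOJ n O (princ n (i, j)) i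

/-- Inverse of `ordKey` (on the relevant range `[1, 2n]`). -/
def invOrdKey (n : ℕ) (t : ℤ) : ℤ := if t ≤ (n : ℤ) then t else t - (2 * n + 1)

/-- The `⋖`-maximal `j'` with `j' ⋖ j` and `(i,j') ∈ O`. -/
def prevO (n : ℕ) (O : Finset (ℤ × ℤ)) (i j : ℤ) : ℤ :=
  invOrdKey n (WithBot.unbotD 0 ((((Nfin n).filter fun j' => (i, j') ∈ O ∧ ordKey n j' < ordKey n j).image
    (ordKey n)).max))

/-- The pipe-dream linear transform `ξ` of `ℝ^P` (coordinates outside `P` are untouched):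
`ξ(ε_{i,i}) = ε_{i,r(i,i)}` and `ξ(ε_{i,j}) = ε_{i,r(i,j)} - ε_{i,r(i,j')}` for `j ≠ i`,
where `j'` is `⋖`-maximal with `j' ⋖ j` and `(i,j') ∈ O`. -/
def xiMap (n : ℕ) (O : Finset (ℤ × ℤ)) (x : (ℤ × ℤ) → ℝ) : (ℤ × ℤ) → ℝ := fun q =>
  if inP n q then
    (∑ j ∈ (Nfin n).filter (fun j => inP n (q.1, j) ∧ rMap n O q.1 j = q.2), x (q.1, j))
    - (∑ j ∈ (Nfin n).filter
        (fun j => inP n (q.1, j) ∧ j ≠ q.1 ∧ rMap n O q.1 (prevO n O q.1 j) = q.2), x (q.1, j))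
  else x q

/-- Indicator vector `1_{M_O(J)} ∈ ℝ^P`. -/
def indicMO (n : ℕ) (O J : Finset (ℤ × ℤ)) : (ℤ × ℤ) → ℝ := fun p =>
  if p ∈ MO n O J then 1 else 0

/-- The fundamental marked chain-order polytope `𝒬_O(ω_k)`:
the convex hull of the vectors `1_{M_O(J)}`, `J ∈ 𝒥ₖ`. -/
def QOfund (n : ℕ) (O : Finset (ℤ × ℤ)) (k : ℕ) : Set ((ℤ × ℤ) → ℝ) :=
  convexHull ℝ {x | ∃ J : Finset (ℤ × ℤ),
    IsIdeal n J ∧ (J ∩ Aset n).card = k ∧ x = indicMO n O J}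

/-- The marked chain-order polytope `𝒬_O(λ)` for `λ = a₁ω₁ + … + a_nω_n`:
the Minkowski sum `a₁𝒬_O(ω₁) + … + a_n𝒬_O(ω_n)`. -/
def QO (n : ℕ) (O : Finset (ℤ × ℤ)) (a : ℕ → ℕ) : Set ((ℤ × ℤ) → ℝ) :=
  ∑ k ∈ Finset.Icc 1 n, a k • QOfund n O k

/-- Integrality (lattice point) predicate. -/
def IsLat (x : (ℤ × ℤ) → ℝ) : Prop := ∀ p, ∃ m : ℤ, x p = m

/-- Type B: `λ(i) = a_i + … + a_{n-1} + a_n/2`. -/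
def lamB (n : ℕ) (a : ℕ → ℕ) (i : ℤ) : ℝ :=
  (∑ t ∈ Finset.Icc i.toNat (n - 1), (a t : ℝ)) + (a n : ℝ) / 2

/-- The type B poset polytope `𝒬^B_O(λ)` (H-description with factor `1/2`
on the coordinates in `B = {(i,-i)}`). -/
def QB (n : ℕ) (O : Finset (ℤ × ℤ)) (lam : ℤ → ℝ) : Set ((ℤ × ℤ) → ℝ) :=
  {x | (∀ i : ℤ, 1 ≤ i → i ≤ (n : ℤ) → x (i, i) = lam i) ∧
    (∀ p, inP n p → 0 ≤ x p) ∧ (∀ p, ¬ inP n p → x p = 0) ∧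
    ∀ (pq rs : ℤ × ℤ) (c : List (ℤ × ℤ)), pq ∈ O → inP n rs →
      (∀ q ∈ c, inP n q ∧ q ∉ O) →
      List.Chain' (plt n) (pq :: (c ++ [rs])) →
      (c.map x).sum ≤ x pq - (if rs.2 = -rs.1 then (1 : ℝ) / 2 else 1) * x rs}

/-- The point `x^{J,D}`. -/
def xJD (n : ℕ) (O J : Finset (ℤ × ℤ)) (D : Finset ℤ) : (ℤ × ℤ) → ℝ := fun p =>
  if p ∈ MO n O J then (if p.2 = -p.1 ∧ p.1 ∉ D then 2 else 1) else 0

/-- The projection `π : ℝ^P → ℝ^{P∖A}` (realized by zeroing the `A`-coordinates). -/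
def piA (x : (ℤ × ℤ) → ℝ) : (ℤ × ℤ) → ℝ := fun p => if p.2 = p.1 then 0 else x p

/-- The transformed type B poset polytope `Π^B_O(λ) = πξ(𝒬^B_O(λ))`. -/
def PiB (n : ℕ) (O : Finset (ℤ × ℤ)) (a : ℕ → ℕ) : Set ((ℤ × ℤ) → ℝ) :=
  (fun x => piA (xiMap n O x)) '' QB n O (lamB n a)

/-- The point `y^D ∈ ℝ^{P∖A}`. -/
def yD (D : Finset ℤ) : (ℤ × ℤ) → ℝ := fun p => if p.2 = -p.1 ∧ p.1 ∈ D then 1 else 0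

/-!
Write `x = g` with `g : P → ℕ`. In any decomposition, `p ∈ P` contributes to `x^{J,∅}` exactly
when `p ∈ J` (for `p ∈ O ∪ B`) or `p` is maximal in `J` (otherwise), so the number `c p` of
ideals containing `p` is forced: `c = g` on `O`, `c = ⌈g/2⌉` on `B` (the parity of `g` there
being `D`), and `c p = g p + max_{q ≻ p} c q` elsewhere. Conversely the chain inequalities of
`𝒬^B_O(λ)` make this `c` antitone, hence bounded by `c(1,1) = λ(1) = m`, and the level sets
`J_i = {p : m ≤ c p + i}`, `i < m`, are nested order ideals realising `x`. Since `c(k,k) = λ(k)`,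
exactly `λ(k) - λ(k+1) = a_k` of them meet `A` in `k` elements.
-/

section Counting

variable {m : ℕ}

lemma list_sum_map_range {M : Type*} [AddCommMonoid M] (f : ℕ → M) :
    ((List.range m).map f).sum = ∑ i ∈ Finset.range m, f i := by
  rw [Finset.sum_eq_multiset_sum, Finset.range_val, Multiset.range, Multiset.map_coe,
    Multiset.sum_coe]

lemma card_filter_range_threshold {s k : ℕ} (hsk : s ≤ k) (hkm : k ≤ m) :
    ((Finset.range m).filter fun i => m ≤ k + i ∧ s + i < m).card = k - s := by
  have : ((Finset.range m).filter fun i => m ≤ k + i ∧ s + i < m) =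
      Finset.Ico (m - k) (m - s) := by
    ext i
    simp only [Finset.mem_filter, Finset.mem_range, Finset.mem_Ico]
    omega
  rw [this, Nat.card_Ico]
  omega

lemma sum_ite_range_threshold {R : Type*} [NonAssocSemiring R] {s k : ℕ} (hsk : s ≤ k)
    (hkm : k ≤ m) (v : R) :
    (∑ i ∈ Finset.range m, if m ≤ k + i ∧ s + i < m then v else 0) = ((k - s : ℕ) : R) * v := by
  rw [Finset.sum_ite, Finset.sum_const_zero, add_zero, Finset.sum_const, nsmul_eq_mul,
    card_filter_range_threshold hsk hkm]

lemma length_filter_map_range {α : Type*} (f : ℕ → α) (q : α → Prop) [DecidablePred q] :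
    (((List.range m).map f).filter fun a => decide (q a)).length =
      ((Finset.range m).filter fun i => q (f i)).card := by
  rw [List.filter_map, List.length_map, Finset.card_def, Finset.filter_val, Finset.range_val,
    Multiset.range, Multiset.filter_coe, Multiset.coe_card]
  rfl

lemma List.IsChain.eq_map_range_filter {α : Type*} [DecidableEq α] {L : List (Finset α)}
    (hL : L.IsChain (· ⊆ ·)) {U : Finset α} (hU : ∀ J ∈ L, J ⊆ U) :
    L = (List.range L.length).map fun i =>
      U.filter fun p => L.length ≤ L.countP (fun J => p ∈ J) + i := by
  induction L with
  | nil => rfl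
  | cons J L ih =>
    have hall : ∀ p ∈ J, L.countP (fun J => p ∈ J) = L.length := by
      intro p hp
      refine List.countP_eq_length.2 fun J' hJ' => decide_eq_true ?_
      exact (List.pairwise_cons.1 (List.isChain_iff_pairwise.1 hL)).1 J' hJ' hp
    rw [List.length_cons, List.range_succ_eq_map, List.map_cons, List.map_map]
    congr 1
    · ext p
      simp only [Finset.mem_filter, List.countP_cons, add_zero]
      by_cases hpJ : p ∈ J
      · simp only [hpJ, hall p hpJ, hU J List.mem_cons_self hpJ, decide_true, if_true, le_refl,
          and_self]
      · simp only [hpJ, decide_false, Bool.false_eq_true, if_false, add_zero, false_iff, not_and,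
          not_le]
        exact fun _ => Nat.lt_succ_of_le List.countP_le_length
    · conv_lhs => rw [ih hL.tail fun J' hJ' => hU J' (List.mem_cons_of_mem J hJ')]
      refine List.map_congr_left fun i _ => Finset.filter_congr fun p _ => ?_
      simp only [List.countP_cons]
      by_cases hpJ : p ∈ J
      · simp only [hpJ, hall p hpJ, decide_true, if_true]
        omega
      · simp only [hpJ, decide_false, Bool.false_eq_true, if_false, add_zero]
        omega

end Counting

section Poset

variable {n : ℕ}

lemma mem_jList {j : ℤ} : j ∈ jList n ↔ (1 ≤ j ∧ j ≤ n) ∨ (-n ≤ j ∧ j ≤ -1) := by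
  simp only [jList, List.pure_def, List.bind_eq_flatMap, List.mem_append, List.mem_map,
    List.mem_flatMap, List.mem_range, List.mem_cons, List.not_mem_nil, or_false, ↓existsAndEq,
    and_true]
  constructor
  · rintro (⟨s, hs, rfl⟩ | ⟨s, hs, rfl⟩) <;> omega
  · rintro (⟨h1, h2⟩ | ⟨h1, h2⟩)
    · exact Or.inl ⟨(j - 1).toNat, by omega, by omega⟩
    · exact Or.inr ⟨(j + n).toNat, by omega, by omega⟩

lemma mem_Pfin {p : ℤ × ℤ} : p ∈ Pfin n ↔ inP n p := by
  refine ⟨fun h => (Finset.mem_filter.1 h).2, fun h => Finset.mem_filter.2 ⟨?_, h⟩⟩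
  obtain ⟨h1, h2, h3, h4⟩ := h
  simp only [posList, List.pure_def, List.bind_eq_flatMap, List.mem_toFinset, List.mem_flatMap,
    List.mem_range, List.mem_cons, List.not_mem_nil, or_false, List.mem_map, ↓existsAndEq,
    and_true]
  refine ⟨(p.1 - 1).toNat, by omega, p.2, ?_, by ext <;> simp; omega⟩
  rw [mem_jList]
  rcases abs_cases p.2 with ⟨_, _⟩ | ⟨_, _⟩ <;> omega

lemma inP_diag {k : ℤ} (h1 : 1 ≤ k) (h2 : k ≤ n) : inP n (k, k) :=
  ⟨h1, h2, le_abs_self k, by rw [abs_of_pos (by omega)]; exact h2⟩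

lemma inP_antidiag {i : ℤ} (h1 : 1 ≤ i) (h2 : i ≤ n) : inP n (i, -i) :=
  ⟨h1, h2, by rw [abs_neg, abs_of_pos (by omega)], by rw [abs_neg, abs_of_pos (by omega)]; exact h2⟩

lemma mem_Aset {p : ℤ × ℤ} : p ∈ Aset n ↔ ∃ k : ℤ, 1 ≤ k ∧ k ≤ n ∧ p = (k, k) := by
  simp only [Aset, Finset.pure_def, Finset.bind_def, Finset.sup_singleton_apply,
    Finset.mem_image, Finset.mem_range, exists_exists_and_eq_and]
  constructor
  · rintro ⟨t, ht, rfl⟩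
    exact ⟨(t : ℤ) + 1, by omega, by omega, rfl⟩
  · rintro ⟨k, h1, h2, rfl⟩
    exact ⟨(k - 1).toNat, by omega, by rw [Int.toNat_of_nonneg (by omega)]; simp⟩

lemma ordKey_mem_Icc {j : ℤ} (h1 : 1 ≤ |j|) (h2 : |j| ≤ n) :
    1 ≤ ordKey n j ∧ ordKey n j ≤ 2 * n := by
  unfold ordKey
  rcases abs_cases j with ⟨_, _⟩ | ⟨_, _⟩ <;> split <;> omega

lemma ordKey_injOn {j j' : ℤ} (h1 : 1 ≤ |j|) (h2 : |j| ≤ n) (h1' : 1 ≤ |j'|) (h2' : |j'| ≤ n)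
    (h : ordKey n j = ordKey n j') : j = j' := by
  unfold ordKey at h
  rcases abs_cases j with ⟨_, _⟩ | ⟨_, _⟩ <;> rcases abs_cases j' with ⟨_, _⟩ | ⟨_, _⟩ <;>
    split at h <;> split at h <;> omega

def height (n : ℕ) (p : ℤ × ℤ) : ℕ := (3 * n - p.1 - ordKey n p.2).toNat

lemma height_lt_of_plt {p q : ℤ × ℤ} (hp : inP n p) (hq : inP n q) (h : plt n p q) :
    height n q < height n p := by
  obtain ⟨⟨hle1, hle2⟩, hne⟩ := h
  obtain ⟨hp1, hp2, hp3, hp4⟩ := hp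
  obtain ⟨hq1, hq2, hq3, hq4⟩ := hq
  have hkp := ordKey_mem_Icc (n := n) (j := p.2) (by omega) hp4
  have hkq := ordKey_mem_Icc (n := n) (j := q.2) (by omega) hq4
  have hlt : p.1 + ordKey n p.2 < q.1 + ordKey n q.2 := by
    by_contra hge
    exact hne (Prod.ext (by omega) (ordKey_injOn (by omega) hp4 (by omega) hq4 (by omega)))
  unfold height
  omega

def upSet (n : ℕ) (p : ℤ × ℤ) : Finset (ℤ × ℤ) := (Pfin n).filter (plt n p)

lemma mem_upSet {p q : ℤ × ℤ} : q ∈ upSet n p ↔ inP n q ∧ plt n p q := by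
  rw [upSet, Finset.mem_filter, mem_Pfin]

lemma inP_induction {motive : ℤ × ℤ → Prop}
    (step : ∀ p, inP n p → (∀ q ∈ upSet n p, motive q) → motive p) :
    ∀ p, inP n p → motive p := by
  intro p
  induction hh : height n p using Nat.strong_induction_on generalizing p with
  | _ h ih =>
    intro hp
    refine step p hp fun q hq => ?_
    have hq' := mem_upSet.1 hq
    exact ih _ (hh ▸ height_lt_of_plt hp hq'.1 hq'.2) q rfl hq'.1

lemma eq_of_antidiag_ple {p q : ℤ × ℤ} (hp : inP n p) (hpB : p.2 = -p.1) (hq : inP n q)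
    (h : ple n p q) : q = p := by
  obtain ⟨hp1, hp2, hp3, hp4⟩ := hp
  obtain ⟨hq1, hq2, hq3, hq4⟩ := hq
  obtain ⟨hle1, hle2⟩ := h
  unfold ordKey at hle2
  rcases abs_cases q.2 with ⟨_, _⟩ | ⟨_, _⟩ <;> split at hle2 <;> split at hle2 <;>
    exact Prod.ext (by omega) (by omega)

lemma upSet_eq_empty_of_antidiag {p : ℤ × ℤ} (hp : inP n p) (hpB : p.2 = -p.1) :
    upSet n p = ∅ :=
  Finset.eq_empty_of_forall_notMem fun _ hq =>
    (mem_upSet.1 hq).2.2 (eq_of_antidiag_ple hp hpB (mem_upSet.1 hq).1 (mem_upSet.1 hq).2.1).symm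

lemma ple_one_one {p : ℤ × ℤ} (hp : inP n p) : ple n (1, 1) p := by
  obtain ⟨hp1, hp2, hp3, hp4⟩ := hp
  have := ordKey_mem_Icc (n := n) (j := p.2) (by omega) hp4
  exact ⟨hp1, by simpa [ordKey] using this.1⟩

def AntitoneOnP (n : ℕ) (c : ℤ × ℤ → ℕ) : Prop :=
  ∀ p q, inP n p → inP n q → ple n p q → c q ≤ c p

end Poset

section Multiplicity

variable {n : ℕ} {O : Finset (ℤ × ℤ)} {g : ℤ × ℤ → ℕ}

/-- The number of ideals containing `p` in the decomposition of the lattice point `g`. -/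
def mult (n : ℕ) (O : Finset (ℤ × ℤ)) (g : ℤ × ℤ → ℕ) (p : ℤ × ℤ) : ℕ :=
  if p ∈ O then g p
  else if p.2 = -p.1 then (g p + 1) / 2
  else if inP n p then g p + (upSet n p).attach.sup fun q => mult n O g q
  else 0
termination_by height n p
decreasing_by exact height_lt_of_plt ‹inP n p› (mem_upSet.1 q.2).1 (mem_upSet.1 q.2).2

lemma mult_of_mem {p : ℤ × ℤ} (hp : p ∈ O) : mult n O g p = g p := by
  rw [mult, if_pos hp]

lemma mult_of_antidiag {p : ℤ × ℤ} (hpO : p ∉ O) (hpB : p.2 = -p.1) :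
    mult n O g p = (g p + 1) / 2 := by
  rw [mult, if_neg hpO, if_pos hpB]

lemma mult_eq_add_sup {p : ℤ × ℤ} (hp : inP n p) (hpO : p ∉ O) (hpB : p.2 ≠ -p.1) :
    mult n O g p = g p + (upSet n p).sup (mult n O g) := by
  rw [mult, if_neg hpO, if_neg hpB, if_pos hp, Finset.sup_attach]

/-- The chain inequalities of `𝒬^B_O(λ)` for an integral point, cleared of the factor `1/2`. -/
def ChainIneqs (n : ℕ) (O : Finset (ℤ × ℤ)) (g : ℤ × ℤ → ℕ) : Prop :=
  ∀ (pq rs : ℤ × ℤ) (c : List (ℤ × ℤ)), pq ∈ O → inP n rs → (∀ q ∈ c, inP n q ∧ q ∉ O) →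
    List.IsChain (plt n) (pq :: (c ++ [rs])) →
    2 * (c.map g).sum + (if rs.2 = -rs.1 then 1 else 2) * g rs ≤ 2 * g pq

lemma isChain_append_singleton {c : List (ℤ × ℤ)} {p r t : ℤ × ℤ}
    (hc : List.IsChain (plt n) (p :: (c ++ [r]))) (hrt : plt n r t) :
    List.IsChain (plt n) (p :: ((c ++ [r]) ++ [t])) := by
  rw [← List.cons_append, List.isChain_append]
  refine ⟨hc, List.isChain_singleton _, fun a ha b hb => ?_⟩
  rw [← List.cons_append, List.getLast?_concat, Option.mem_some_iff] at ha
  rw [List.head?_cons, Option.mem_some_iff] at hb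
  exact ha ▸ hb ▸ hrt

lemma sum_add_mult_le (hB : ∀ p ∈ O, p.2 ≠ -p.1) (hg : ChainIneqs n O g) :
    ∀ r, inP n r → ∀ p ∈ O, ∀ c : List (ℤ × ℤ), (∀ q ∈ c, inP n q ∧ q ∉ O) →
      List.IsChain (plt n) (p :: (c ++ [r])) → (c.map g).sum + mult n O g r ≤ g p := by
  refine inP_induction fun r hr ih p hp c hc hch => ?_
  have hineq := hg p r c hp hr hc hch
  by_cases hrO : r ∈ O
  · rw [mult_of_mem hrO]
    rw [if_neg (hB r hrO)] at hineq
    omega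
  by_cases hrB : r.2 = -r.1
  · rw [mult_of_antidiag hrO hrB]
    rw [if_pos hrB] at hineq
    omega
  rw [mult_eq_add_sup hr hrO hrB]
  rw [if_neg hrB] at hineq
  suffices (upSet n r).sup (mult n O g) ≤ g p - (c.map g).sum - g r by omega
  refine Finset.sup_le fun t ht => ?_
  have := ih t ht p hp (c ++ [r])
    (fun q hq => (List.mem_append.1 hq).elim (hc q) fun h => List.mem_singleton.1 h ▸ ⟨hr, hrO⟩)
    (isChain_append_singleton hch (mem_upSet.1 ht).2)
  simp only [List.map_append, List.sum_append, List.map_cons, List.map_nil, List.sum_singleton]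
    at this
  omega

lemma mult_antitone (hB : ∀ p ∈ O, p.2 ≠ -p.1) (hg : ChainIneqs n O g) :
    AntitoneOnP n (mult n O g) := by
  intro p q hp hq hpq
  by_cases heq : p = q
  · rw [heq]
  by_cases hpO : p ∈ O
  · have := sum_add_mult_le hB hg q hq p hpO [] (by simp) (by simpa using ⟨hpq, heq⟩)
    rw [mult_of_mem hpO]
    simpa using this
  by_cases hpB : p.2 = -p.1
  · exact absurd (eq_of_antidiag_ple hp hpB hq hpq).symm heq
  rw [mult_eq_add_sup hp hpO hpB]
  exact le_add_left (Finset.le_sup (f := mult n O g) (mem_upSet.2 ⟨hq, hpq, heq⟩))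

lemma mult_le_of_inP (hB : ∀ p ∈ O, p.2 ≠ -p.1) (hA : Aset n ⊆ O) (hg : ChainIneqs n O g)
    {p : ℤ × ℤ} (hp : inP n p) : mult n O g p ≤ g (1, 1) := by
  have h11 : inP n (1, 1) := inP_diag le_rfl (hp.1.trans hp.2.1)
  rw [← mult_of_mem (n := n) (g := g) (hA (mem_Aset.2 ⟨1, le_rfl, h11.2.1, rfl⟩))]
  exact mult_antitone hB hg _ _ h11 hp (ple_one_one hp)

end Multiplicity

section LevelChain

variable {n : ℕ} {O : Finset (ℤ × ℤ)} {g c : ℤ × ℤ → ℕ} {m : ℕ}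

def levelSet (n : ℕ) (c : ℤ × ℤ → ℕ) (m i : ℕ) : Finset (ℤ × ℤ) :=
  (Pfin n).filter fun p => m ≤ c p + i

/-- The ideals `J₀ ⊆ … ⊆ J_{m-1}` such that `p` lies in exactly `c p` of them. -/
def levelChain (n : ℕ) (c : ℤ × ℤ → ℕ) (m : ℕ) : List (Finset (ℤ × ℤ)) :=
  (List.range m).map (levelSet n c m)

/-- The value at `p` of `∑ x^{J,∅}` over `levelChain n c m`. -/
def levelWeight (n : ℕ) (O : Finset (ℤ × ℤ)) (c : ℤ × ℤ → ℕ) (p : ℤ × ℤ) : ℕ :=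
  if p ∈ O then c p else if p.2 = -p.1 then 2 * c p else c p - (upSet n p).sup c

lemma mem_levelSet {i : ℕ} {p : ℤ × ℤ} : p ∈ levelSet n c m i ↔ inP n p ∧ m ≤ c p + i := by
  rw [levelSet, Finset.mem_filter, mem_Pfin]

lemma isIdeal_levelSet (hc : AntitoneOnP n c) (i : ℕ) : IsIdeal n (levelSet n c m i) := by
  refine ⟨fun p hp => (mem_levelSet.1 hp).1, fun p hp q hq hqp => ?_⟩
  obtain ⟨hpP, hpm⟩ := mem_levelSet.1 hp
  have hqP := mem_Pfin.1 hq
  exact mem_levelSet.2 ⟨hqP, hpm.trans (Nat.add_le_add_right (hc q p hqP hpP hqp) i)⟩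

lemma isChain_levelChain : List.IsChain (· ⊆ ·) (levelChain n c m) := by
  rw [levelChain, List.isChain_map, List.isChain_iff_getElem]
  intro i _ p hp
  obtain ⟨hpP, hpm⟩ := mem_levelSet.1 hp
  exact mem_levelSet.2 ⟨hpP, by simp only [List.getElem_range] at hpm ⊢; omega⟩

lemma mem_maxPrec_iff {J : Finset (ℤ × ℤ)} (hJ : ∀ p ∈ J, inP n p) {p : ℤ × ℤ} :
    p ∈ maxPrec n J ↔ p ∈ J ∧ ∀ q ∈ upSet n p, q ∉ J := by
  rw [maxPrec, Finset.mem_filter]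
  refine and_congr_right fun _ => ⟨fun h q hq hqJ => ?_, fun h q hqJ hpq => ?_⟩
  · exact (mem_upSet.1 hq).2.2 (h q hqJ (mem_upSet.1 hq).2.1).symm
  · by_contra hne
    exact h q (mem_upSet.2 ⟨hJ q hqJ, hpq, Ne.symm hne⟩) hqJ

lemma mem_MO_of_mem {J : Finset (ℤ × ℤ)} {p : ℤ × ℤ} (hJ : ∀ p ∈ J, inP n p) (hpO : p ∈ O) :
    p ∈ MO n O J ↔ p ∈ J := by
  refine ⟨fun h => ?_, fun h => Finset.mem_union_left _ (Finset.mem_inter.2 ⟨h, hpO⟩)⟩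
  rcases Finset.mem_union.1 h with h | h
  · exact (Finset.mem_inter.1 h).1
  · exact ((mem_maxPrec_iff hJ).1 h).1

lemma mem_MO_of_notMem {J : Finset (ℤ × ℤ)} {p : ℤ × ℤ} (hJ : ∀ p ∈ J, inP n p)
    (hpO : p ∉ O) : p ∈ MO n O J ↔ p ∈ J ∧ ∀ q ∈ upSet n p, q ∉ J := by
  rw [MO, Finset.mem_union, Finset.mem_inter, ← mem_maxPrec_iff hJ]
  exact ⟨fun h => h.elim (fun h => absurd h.2 hpO) id, Or.inr⟩

lemma xJD_empty_apply {J : Finset (ℤ × ℤ)} {p : ℤ × ℤ} :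
    xJD n O J ∅ p = if p ∈ MO n O J then (if p.2 = -p.1 then 2 else 1) else 0 := by
  simp only [xJD, Finset.notMem_empty, not_false_eq_true, and_true]

lemma xJD_levelSet_apply (hc : AntitoneOnP n c) {p : ℤ × ℤ} (hp : inP n p) {i : ℕ} (hi : i < m) :
    xJD n O (levelSet n c m i) ∅ p =
      if m ≤ c p + i ∧ (if p ∈ O then 0 else (upSet n p).sup c) + i < m then
        (if p.2 = -p.1 then 2 else 1) else 0 := by
  have hJ := (isIdeal_levelSet (m := m) hc i).1
  rw [xJD_empty_apply]
  refine if_congr ?_ rfl rfl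
  by_cases hpO : p ∈ O
  · rw [mem_MO_of_mem hJ hpO, mem_levelSet, if_pos hpO]
    exact ⟨fun h => ⟨h.2, by omega⟩, fun h => ⟨hp, h.1⟩⟩
  · have hsup : (upSet n p).sup c + i < m ↔ ∀ q ∈ upSet n p, q ∉ levelSet n c m i := by
      rw [← Nat.lt_sub_iff_add_lt, Finset.sup_lt_iff (Nat.sub_pos_of_lt hi)]
      refine forall₂_congr fun q hq => ?_
      rw [mem_levelSet, not_and, not_le]
      exact ⟨fun h _ => by omega, fun h => by have := h (mem_upSet.1 hq).1; omega⟩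
    rw [mem_MO_of_notMem hJ hpO, mem_levelSet, if_neg hpO, hsup]
    exact ⟨fun h => ⟨h.1.2, h.2⟩, fun h => ⟨⟨hp, h.1⟩, h.2⟩⟩

lemma sum_xJD_levelChain_apply (hB : ∀ p ∈ O, p.2 ≠ -p.1) (hc : AntitoneOnP n c)
    (hcm : ∀ p, inP n p → c p ≤ m) {p : ℤ × ℤ} (hp : inP n p) :
    ((levelChain n c m).map fun J => xJD n O J ∅).sum p = levelWeight n O c p := by
  rw [Pi.list_sum_apply, levelChain, List.map_map, List.map_map, list_sum_map_range]
  simp only [Function.comp_apply]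
  rw [Finset.sum_congr rfl fun i hi => xJD_levelSet_apply hc hp (Finset.mem_range.1 hi)]
  have hsup : (upSet n p).sup c ≤ c p :=
    Finset.sup_le fun q hq => hc p q hp (mem_upSet.1 hq).1 (mem_upSet.1 hq).2.1
  by_cases hpO : p ∈ O
  · rw [if_pos hpO, if_neg (hB p hpO), sum_ite_range_threshold (Nat.zero_le _) (hcm p hp),
      levelWeight, if_pos hpO]
    simp
  by_cases hpB : p.2 = -p.1
  · rw [if_neg hpO, if_pos hpB, upSet_eq_empty_of_antidiag hp hpB, Finset.sup_empty,
      Nat.bot_eq_zero, sum_ite_range_threshold (Nat.zero_le _) (hcm p hp), levelWeight,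
      if_neg hpO, if_pos hpB, Nat.sub_zero, Nat.cast_mul, mul_comm]
    norm_num
  · rw [if_neg hpO, if_neg hpB, sum_ite_range_threshold hsup (hcm p hp), levelWeight,
      if_neg hpO, if_neg hpB, mul_one]

lemma MO_subset (J : Finset (ℤ × ℤ)) : MO n O J ⊆ J :=
  Finset.union_subset Finset.inter_subset_left (Finset.filter_subset _ _)

lemma sum_xJD_levelChain_apply_of_not_inP {p : ℤ × ℤ} (hp : ¬ inP n p) :
    ((levelChain n c m).map fun J => xJD n O J ∅).sum p = 0 := by
  rw [Pi.list_sum_apply, List.map_map]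
  refine List.sum_eq_zero fun v hv => ?_
  obtain ⟨J, hJ, rfl⟩ := List.mem_map.1 hv
  obtain ⟨i, -, rfl⟩ := List.mem_map.1 hJ
  exact if_neg fun h => hp (mem_levelSet.1 (MO_subset _ h)).1

lemma eq_sum_levelChain_sub_yD_iff (hB : ∀ p ∈ O, p.2 ≠ -p.1) (hc : AntitoneOnP n c)
    (hcm : ∀ p, inP n p → c p ≤ m) {D : Finset ℤ} (hD : D ⊆ Finset.Icc 1 (n : ℤ))
    (hg0 : ∀ p, ¬ inP n p → g p = 0) :
    (fun p => (g p : ℝ)) = ((levelChain n c m).map fun J => xJD n O J ∅).sum - yD D ↔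
      ∀ p, inP n p → levelWeight n O c p = g p + if p.2 = -p.1 ∧ p.1 ∈ D then 1 else 0 := by
  rw [funext_iff]
  refine forall_congr' fun p => ?_
  by_cases hp : inP n p
  · rw [Pi.sub_apply, sum_xJD_levelChain_apply hB hc hcm hp, yD, eq_sub_iff_add_eq,
      ← Nat.cast_one, ← Nat.cast_zero, ← Nat.cast_ite, ← Nat.cast_add, Nat.cast_inj, eq_comm]
    exact (imp_iff_right hp).symm
  · have hyD : yD D p = 0 := if_neg fun (h : p.2 = -p.1 ∧ p.1 ∈ D) => hp <| by
      rw [show p = (p.1, -p.1) from Prod.ext rfl h.1]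
      exact inP_antidiag (Finset.mem_Icc.1 (hD h.2)).1 (Finset.mem_Icc.1 (hD h.2)).2
    rw [Pi.sub_apply, sum_xJD_levelChain_apply_of_not_inP hp, hyD, hg0 p hp]
    simp [hp]

end LevelChain

section Decomposition

variable {n : ℕ} {O : Finset (ℤ × ℤ)} {g : ℤ × ℤ → ℕ} {c : ℤ × ℤ → ℕ} {m : ℕ}

def oddSet (n : ℕ) (g : ℤ × ℤ → ℕ) : Finset ℤ :=
  (Finset.Icc 1 (n : ℤ)).filter fun i => Odd (g (i, -i))

lemma levelWeight_mult (hB : ∀ p ∈ O, p.2 ≠ -p.1) {p : ℤ × ℤ} (hp : inP n p) :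
    levelWeight n O (mult n O g) p = g p + if p.2 = -p.1 ∧ p.1 ∈ oddSet n g then 1 else 0 := by
  by_cases hpO : p ∈ O
  · rw [levelWeight, if_pos hpO, mult_of_mem hpO, if_neg fun h => hB p hpO h.1, add_zero]
  by_cases hpB : p.2 = -p.1
  · have hp' : ((p.1, -p.1) : ℤ × ℤ) = p := Prod.ext rfl hpB.symm
    have hodd : p.1 ∈ oddSet n g ↔ g p % 2 = 1 := by
      rw [oddSet, Finset.mem_filter, Finset.mem_Icc, hp', Nat.odd_iff]
      exact and_iff_right ⟨hp.1, hp.2.1⟩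
    rw [levelWeight, if_neg hpO, if_pos hpB, mult_of_antidiag hpO hpB]
    by_cases h : g p % 2 = 1
    · rw [if_pos ⟨hpB, hodd.2 h⟩]; omega
    · rw [if_neg fun h' => h (hodd.1 h'.2)]; omega
  · rw [levelWeight, if_neg hpO, if_neg hpB, mult_eq_add_sup hp hpO hpB,
      if_neg fun h => hpB h.1]
    omega

lemma eq_mult_of_levelWeight_eq (hB : ∀ p ∈ O, p.2 ≠ -p.1) (hc : AntitoneOnP n c) {D : Finset ℤ}
    (hw : ∀ p, inP n p → levelWeight n O c p = g p + if p.2 = -p.1 ∧ p.1 ∈ D then 1 else 0) :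
    ∀ p, inP n p → c p = mult n O g p := by
  refine inP_induction fun p hp ih => ?_
  have hwp := hw p hp
  by_cases hpO : p ∈ O
  · rw [levelWeight, if_pos hpO, if_neg fun h => hB p hpO h.1] at hwp
    rw [mult_of_mem hpO, hwp, add_zero]
  by_cases hpB : p.2 = -p.1
  · rw [levelWeight, if_neg hpO, if_pos hpB] at hwp
    rw [mult_of_antidiag hpO hpB]
    split_ifs at hwp <;> omega
  · rw [levelWeight, if_neg hpO, if_neg hpB, if_neg fun h => hpB h.1] at hwp
    have hsup : (upSet n p).sup c ≤ c p :=
      Finset.sup_le fun q hq => hc p q hp (mem_upSet.1 hq).1 (mem_upSet.1 hq).2.1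
    rw [mult_eq_add_sup hp hpO hpB, ← Finset.sup_congr rfl ih]
    omega

lemma eq_oddSet_of_levelWeight_eq (hB : ∀ p ∈ O, p.2 ≠ -p.1) {D : Finset ℤ}
    (hD : D ⊆ Finset.Icc 1 (n : ℤ))
    (hw : ∀ p, inP n p → levelWeight n O c p = g p + if p.2 = -p.1 ∧ p.1 ∈ D then 1 else 0) :
    D = oddSet n g := by
  have hparity (i : ℤ) (hi : i ∈ Finset.Icc 1 (n : ℤ)) : i ∈ D ↔ g (i, -i) % 2 = 1 := by
    have hwi := hw _ (inP_antidiag (Finset.mem_Icc.1 hi).1 (Finset.mem_Icc.1 hi).2)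
    rw [levelWeight, if_neg fun h => hB _ h rfl, if_pos rfl] at hwi
    simp only [true_and] at hwi
    split_ifs at hwi with hiD <;> simp only [hiD, true_iff, false_iff] <;> omega
  ext i
  rw [oddSet, Finset.mem_filter, Nat.odd_iff]
  exact ⟨fun hi => ⟨hD hi, (hparity i (hD hi)).1 hi⟩, fun ⟨hi, hodd⟩ => (hparity i hi).2 hodd⟩

end Decomposition

section Uniqueness

variable {n : ℕ} {O : Finset (ℤ × ℤ)} {g : ℤ × ℤ → ℕ} {c c' : ℤ × ℤ → ℕ} {m : ℕ}

lemma levelChain_congr (h : ∀ p, inP n p → c p = c' p) : levelChain n c m = levelChain n c' m :=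
  List.map_congr_left fun _ _ => Finset.filter_congr fun p hp => by rw [h p (mem_Pfin.1 hp)]

lemma eq_levelChain_countP {L : List (Finset (ℤ × ℤ))} (hLid : ∀ J ∈ L, IsIdeal n J)
    (hL : L.IsChain (· ⊆ ·)) :
    L = levelChain n (fun p => L.countP fun J => p ∈ J) L.length :=
  hL.eq_map_range_filter fun J hJ p hp => mem_Pfin.2 ((hLid J hJ).1 p hp)

lemma antitoneOnP_countP {L : List (Finset (ℤ × ℤ))} (hLid : ∀ J ∈ L, IsIdeal n J) :
    AntitoneOnP n fun p => L.countP fun J => p ∈ J :=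
  fun p q hp _ hpq => List.countP_mono_left fun J hJ hqJ =>
    decide_eq_true ((hLid J hJ).2 q (of_decide_eq_true hqJ) p (mem_Pfin.2 hp) hpq)

lemma eq_levelChain_mult_of_eq_sum_sub_yD (hB : ∀ p ∈ O, p.2 ≠ -p.1)
    (hg0 : ∀ p, ¬ inP n p → g p = 0) {L : List (Finset (ℤ × ℤ))} {D : Finset ℤ}
    (hLid : ∀ J ∈ L, IsIdeal n J) (hL : L.IsChain (· ⊆ ·)) (hD : D ⊆ Finset.Icc 1 (n : ℤ))
    (heq : (fun p => (g p : ℝ)) = (L.map fun J => xJD n O J ∅).sum - yD D) :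
    L = levelChain n (mult n O g) L.length ∧ D = oddSet n g := by
  have hc := antitoneOnP_countP hLid
  have hLc := eq_levelChain_countP hLid hL
  rw [hLc, eq_sum_levelChain_sub_yD_iff hB hc (fun _ _ => List.countP_le_length) hD hg0] at heq
  exact ⟨hLc.trans (levelChain_congr (eq_mult_of_levelWeight_eq hB hc heq)),
    eq_oddSet_of_levelWeight_eq hB hD heq⟩

end Uniqueness

section DiagonalCounts

variable {n : ℕ} {c : ℤ × ℤ → ℕ} {m : ℕ}

lemma ple_diag {j k : ℤ} (hj : 1 ≤ j) (hjk : j ≤ k) : ple n (j, j) (k, k) :=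
  ⟨hjk, by unfold ordKey; split_ifs <;> omega⟩

lemma card_inter_Aset_le (J : Finset (ℤ × ℤ)) : (J ∩ Aset n).card ≤ n := by
  have hsub : J ∩ Aset n ⊆ (Finset.Icc 1 (n : ℤ)).image fun i => (i, i) := fun p hp => by
    obtain ⟨k, hk1, hkn, rfl⟩ := mem_Aset.1 (Finset.mem_inter.1 hp).2
    exact Finset.mem_image.2 ⟨k, Finset.mem_Icc.2 ⟨hk1, hkn⟩, rfl⟩
  refine (Finset.card_le_card hsub).trans (Finset.card_image_le.trans ?_)
  simp

/-- An ideal meets the chain `A` in an initial segment. -/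
lemma le_card_inter_Aset_iff {J : Finset (ℤ × ℤ)} (hJ : IsIdeal n J) {k : ℕ} (hk1 : 1 ≤ k)
    (hkn : k ≤ n) : k ≤ (J ∩ Aset n).card ↔ ((k : ℤ), (k : ℤ)) ∈ J := by
  have hinj : Function.Injective fun i : ℤ => (i, i) := fun i j h => congrArg Prod.fst h
  constructor
  · intro hk
    by_contra hkJ
    have hsub : J ∩ Aset n ⊆ (Finset.Icc 1 ((k : ℤ) - 1)).image fun i => (i, i) := fun p hp => by
      obtain ⟨hpJ, hpA⟩ := Finset.mem_inter.1 hp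
      obtain ⟨j, hj1, hjn, rfl⟩ := mem_Aset.1 hpA
      refine Finset.mem_image.2 ⟨j, Finset.mem_Icc.2 ⟨hj1, ?_⟩, rfl⟩
      by_contra hjk
      exact hkJ (hJ.2 _ hpJ _ (mem_Pfin.2 (inP_diag (by omega) (by omega)))
        (ple_diag (by omega) (by omega)))
    have := Finset.card_le_card hsub
    rw [Finset.card_image_of_injective _ hinj, Int.card_Icc] at this
    omega
  · intro hkJ
    have hsub : (Finset.Icc 1 (k : ℤ)).image (fun i => (i, i)) ⊆ J ∩ Aset n := fun p hp => by
      obtain ⟨j, hj, rfl⟩ := Finset.mem_image.1 hp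
      obtain ⟨hj1, hjk⟩ := Finset.mem_Icc.1 hj
      exact Finset.mem_inter.2 ⟨hJ.2 _ hkJ _ (mem_Pfin.2 (inP_diag hj1 (by omega)))
        (ple_diag hj1 hjk), mem_Aset.2 ⟨j, hj1, by omega, rfl⟩⟩
    have := Finset.card_le_card hsub
    rw [Finset.card_image_of_injective _ hinj, Int.card_Icc] at this
    omega

lemma length_filter_levelChain_card_eq (hc : AntitoneOnP n c) (hcm : ∀ p, inP n p → c p ≤ m)
    {k : ℕ} (hk1 : 1 ≤ k) (hkn : k < n) :
    ((levelChain n c m).filter fun J => decide ((J ∩ Aset n).card = k)).length =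
      c (k, k) - c (k + 1, k + 1) := by
  have hkP : inP n ((k : ℤ), (k : ℤ)) := inP_diag (by omega) (by omega)
  have hk1P : inP n ((k : ℤ) + 1, (k : ℤ) + 1) := inP_diag (by omega) (by omega)
  have hlevel (i : ℕ) : (levelSet n c m i ∩ Aset n).card = k ↔
      m ≤ c (k, k) + i ∧ c (k + 1, k + 1) + i < m := by
    have hJ := isIdeal_levelSet (m := m) hc i
    have hsucc := le_card_inter_Aset_iff hJ (k := k + 1) (by omega) hkn
    rw [le_antisymm_iff, ← not_lt, Nat.lt_iff_add_one_le, hsucc, le_card_inter_Aset_iff hJ hk1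
      hkn.le, mem_levelSet, mem_levelSet, Nat.cast_add_one, not_and, not_le]
    exact ⟨fun ⟨h1, h2⟩ => ⟨h2.2, h1 hk1P⟩, fun ⟨h1, h2⟩ => ⟨fun _ => h2, hkP, h1⟩⟩
  rw [levelChain, length_filter_map_range, Finset.filter_congr fun i _ => hlevel i,
    card_filter_range_threshold (hc _ _ hkP hk1P (ple_diag (by omega) (by omega))) (hcm _ hkP)]

lemma length_filter_levelChain_card_eq_self (hn : 1 ≤ n) (hc : AntitoneOnP n c)
    (hcm : ∀ p, inP n p → c p ≤ m) :
    ((levelChain n c m).filter fun J => decide ((J ∩ Aset n).card = n)).length = c (n, n) := by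
  have hnP : inP n ((n : ℤ), (n : ℤ)) := inP_diag (by omega) le_rfl
  have hlevel (i : ℕ) (hi : i ∈ Finset.range m) : (levelSet n c m i ∩ Aset n).card = n ↔
      m ≤ c (n, n) + i ∧ 0 + i < m := by
    rw [le_antisymm_iff, and_iff_right (card_inter_Aset_le _),
      le_card_inter_Aset_iff (isIdeal_levelSet hc i) hn le_rfl, mem_levelSet, zero_add]
    exact ⟨fun h => ⟨h.2, Finset.mem_range.1 hi⟩, fun h => ⟨hnP, h.1⟩⟩
  rw [levelChain, length_filter_map_range, Finset.filter_congr hlevel,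
    card_filter_range_threshold (Nat.zero_le _) (hcm _ hnP), Nat.sub_zero]

lemma exists_mem_levelChain {p : ℤ × ℤ} (hp : inP n p) (hc1 : 1 ≤ c p) (hcm : c p ≤ m) :
    ∃ J ∈ levelChain n c m, p ∈ J :=
  ⟨levelSet n c m (m - 1), List.mem_map.2 ⟨m - 1, List.mem_range.2 (by omega), rfl⟩,
    mem_levelSet.2 ⟨hp, by omega⟩⟩

end DiagonalCounts

section LatticePoints

variable {n : ℕ} {O : Finset (ℤ × ℤ)} {g : ℤ × ℤ → ℕ}

/-- `λ(k) = a_k + … + a_{n-1} + a_n/2` as a natural number. -/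
def lamNat (n : ℕ) (a : ℕ → ℕ) (k : ℕ) : ℕ := ∑ t ∈ Finset.Icc k (n - 1), a t + a n / 2

lemma lamNat_sub_lamNat_succ (a : ℕ → ℕ) {k : ℕ} (hk : k < n) :
    lamNat n a k - lamNat n a (k + 1) = a k := by
  rw [lamNat, lamNat, ← Finset.add_sum_Ioc_eq_sum_Icc (by omega), ← Finset.Icc_add_one_left_eq_Ioc]
  omega

lemma lamNat_self (a : ℕ → ℕ) (hn : 1 ≤ n) : lamNat n a n = a n / 2 := by
  rw [lamNat, Finset.Icc_eq_empty (by omega), Finset.sum_empty, zero_add]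

lemma exists_nat_eq_of_mem_QB {lam : ℤ → ℝ} {x : (ℤ × ℤ) → ℝ} (hx : x ∈ QB n O lam)
    (hlat : IsLat x) : ∃ g : ℤ × ℤ → ℕ, x = fun p => (g p : ℝ) := by
  have (p : ℤ × ℤ) : ∃ k : ℕ, x p = k := by
    obtain ⟨z, hz⟩ := hlat p
    have hx0 : 0 ≤ x p := by
      by_cases hp : inP n p
      · exact hx.2.1 p hp
      · exact (hx.2.2.1 p hp).ge
    rw [hz] at hx0 ⊢
    exact ⟨z.toNat, by exact_mod_cast (Int.toNat_of_nonneg (by exact_mod_cast hx0)).symm⟩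
  choose g hg using this
  exact ⟨g, funext hg⟩

lemma chainIneqs_of_mem_QB {lam : ℤ → ℝ} (hx : (fun p => (g p : ℝ)) ∈ QB n O lam) :
    ChainIneqs n O g := by
  intro pq rs c hpq hrs hc hch
  have h := hx.2.2.2 pq rs c hpq hrs hc hch
  have hsum : (c.map fun p => (g p : ℝ)).sum = ((c.map g).sum : ℝ) := by
    rw [Nat.cast_list_sum, List.map_map]
    rfl
  beta_reduce at h
  rw [hsum] at h
  split_ifs at h ⊢
  · have : (2 * (c.map g).sum + 1 * g rs : ℝ) ≤ 2 * g pq := by linarith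
    exact_mod_cast this
  · have : (2 * (c.map g).sum + 2 * g rs : ℝ) ≤ 2 * g pq := by linarith
    exact_mod_cast this

lemma eq_zero_of_mem_QB {lam : ℤ → ℝ} (hx : (fun p => (g p : ℝ)) ∈ QB n O lam) {p : ℤ × ℤ}
    (hp : ¬ inP n p) : g p = 0 := by
  have h := hx.2.2.1 p hp
  beta_reduce at h
  exact_mod_cast h

lemma eq_lamNat_of_mem_QB {a : ℕ → ℕ} (han : 2 ∣ a n)
    (hx : (fun p => (g p : ℝ)) ∈ QB n O (lamB n a)) {k : ℕ} (hk1 : 1 ≤ k) (hkn : k ≤ n) :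
    g (k, k) = lamNat n a k := by
  have h := hx.1 k (by exact_mod_cast hk1) (by exact_mod_cast hkn)
  have hhalf : (a n : ℝ) / 2 = ((a n / 2 : ℕ) : ℝ) := by
    rw [Nat.cast_div han (by norm_num)]
    norm_num
  beta_reduce at h
  rw [lamB, Int.toNat_natCast, hhalf] at h
  exact_mod_cast h

end LatticePoints

/-- Here `x^{J_m,D}` is encoded as `x^{J_m,∅} - yD D`. -/
theorem stmt14_general (n : ℕ) (hn : 1 ≤ n) (O : Finset (ℤ × ℤ)) (hA : Aset n ⊆ O)
    (hB : ∀ p ∈ O, p.2 ≠ -p.1) (a : ℕ → ℕ) (han : 2 ∣ a n)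
    (x : (ℤ × ℤ) → ℝ) (hx : x ∈ QB n O (lamB n a)) (hlat : IsLat x) :
    ∃! z : List (Finset (ℤ × ℤ)) × Finset ℤ,
      (∀ J ∈ z.1, IsIdeal n J) ∧ List.Chain' (· ⊆ ·) z.1 ∧
      (∀ k : ℕ, 1 ≤ k → k ≤ n - 1 →
        (z.1.filter fun J => decide ((J ∩ Aset n).card = k)).length = a k) ∧
      (z.1.filter fun J => decide ((J ∩ Aset n).card = n)).length = a n / 2 ∧
      z.1.length = (∑ k ∈ Finset.Icc 1 (n - 1), a k) + a n / 2 ∧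
      z.2 ⊆ Finset.Icc 1 (n : ℤ) ∧
      (∀ i ∈ z.2, ∃ J ∈ z.1, ((i, -i) : ℤ × ℤ) ∈ J) ∧
      x = (z.1.map fun J => xJD n O J ∅).sum - yD z.2 := by
  obtain ⟨g, rfl⟩ := exists_nat_eq_of_mem_QB hx hlat
  have hg : ChainIneqs n O g := chainIneqs_of_mem_QB hx
  have hg0 (p : ℤ × ℤ) (hp : ¬ inP n p) : g p = 0 := eq_zero_of_mem_QB hx hp
  have hdiag (k : ℕ) (hk1 : 1 ≤ k) (hkn : k ≤ n) : mult n O g (k, k) = lamNat n a k :=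
    (mult_of_mem (hA (mem_Aset.2 ⟨k, by omega, by omega, rfl⟩))).trans
      (eq_lamNat_of_mem_QB han hx hk1 hkn)
  have hc := mult_antitone hB hg
  have hcm (p : ℤ × ℤ) (hp : inP n p) : mult n O g p ≤ lamNat n a 1 :=
    (mult_le_of_inP hB hA hg hp).trans_eq (by simpa using eq_lamNat_of_mem_QB han hx le_rfl hn)
  refine ⟨(levelChain n (mult n O g) (lamNat n a 1), oddSet n g),
    ⟨?_, isChain_levelChain, fun k hk1 hkn => ?_, ?_, ?_, Finset.filter_subset _ _,
      fun i hi => ?_, ?_⟩, ?_⟩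
  · rintro J hJ
    obtain ⟨i, -, rfl⟩ := List.mem_map.1 hJ
    exact isIdeal_levelSet hc i
  · rw [length_filter_levelChain_card_eq hc hcm hk1 (by omega), ← Nat.cast_add_one,
      hdiag k hk1 (by omega), hdiag (k + 1) (by omega) (by omega),
      lamNat_sub_lamNat_succ a (by omega)]
  · rw [length_filter_levelChain_card_eq_self hn hc hcm, hdiag n hn le_rfl, lamNat_self a hn]
  · rw [levelChain, List.length_map, List.length_range, lamNat]
  · obtain ⟨hi, r, hr⟩ := Finset.mem_filter.1 hi
    have hiP := inP_antidiag (Finset.mem_Icc.1 hi).1 (Finset.mem_Icc.1 hi).2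
    refine exists_mem_levelChain hiP ?_ (hcm _ hiP)
    rw [mult_of_antidiag (fun h => hB _ h rfl) rfl, hr]
    omega
  · exact (eq_sum_levelChain_sub_yD_iff hB hc hcm (Finset.filter_subset _ _) hg0).2
      fun p hp => levelWeight_mult hB hp
  · rintro ⟨L, D⟩ ⟨hLid, hL, -, -, hlen, hD, -, heq⟩
    obtain ⟨hL', hD'⟩ := eq_levelChain_mult_of_eq_sum_sub_yD hB hg0 hLid hL hD heq
    exact Prod.ext (hL'.trans (by rw [hlen]; rfl)) hD'

/-- For `λ = (a₁,…,a_n)` integral dominant with `a_n` even, every lattice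
point `x ∈ 𝒬^B_O(λ) ∩ ℤ^P` has a unique decomposition
`x = x^{J₁,∅} + … + x^{J_{m−1},∅} + x^{J_m,D}` with order ideals `J₁ ⊆ … ⊆ J_m`, exactly
`a_k` of them in `𝒥ₖ` for `k ≤ n−1` and `a_n/2` in `𝒥ₙ`, and `D ⊆ [1,n]` with
`(i,−i) ∈ J_m` for `i ∈ D`.  (We encode `x^{J_m,D} = x^{J_m,∅} − 1_{{(i,−i) : i ∈ D}}`.) -/
theorem stmt14 (n : ℕ) (hn : 1 ≤ n) (O : Finset (ℤ × ℤ)) (hA : Aset n ⊆ O)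
    (hO : O ⊆ Pfin n) (hB : ∀ p ∈ O, p.2 ≠ -p.1) (a : ℕ → ℕ) (han : 2 ∣ a n)
    (x : (ℤ × ℤ) → ℝ) (hx : x ∈ QB n O (lamB n a)) (hlat : IsLat x) :
    ∃! z : List (Finset (ℤ × ℤ)) × Finset ℤ,
      (∀ J ∈ z.1, IsIdeal n J) ∧ List.Chain' (· ⊆ ·) z.1 ∧
      (∀ k : ℕ, 1 ≤ k → k ≤ n - 1 →
        (z.1.filter fun J => decide ((J ∩ Aset n).card = k)).length = a k) ∧
      (z.1.filter fun J => decide ((J ∩ Aset n).card = n)).length = a n / 2 ∧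
      z.1.length = (∑ k ∈ Finset.Icc 1 (n - 1), a k) + a n / 2 ∧
      z.2 ⊆ Finset.Icc 1 (n : ℤ) ∧
      (∀ i ∈ z.2, ∃ J ∈ z.1, ((i, -i) : ℤ × ℤ) ∈ J) ∧
      x = (z.1.map fun J => xJD n O J ∅).sum - yD z.2 :=
  stmt14_general n hn O hA hB a han x hx hlat

end
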